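/- Let X, U, Y be complex Hilbert spaces and let Σ = (A,B,C,D) be a passive system. Let X^c be the controllable subspace and X^o the observable subspace of Σ, let P_{X^o} : X → X denote the orthogonal projection onto X^o, and let X' be the closure of P_{X^o}(X^c). Define A' : X' → X' by A' = P_{X'}∘A∘ι_{X'}, B' : U → X' by B' = P_{X'}∘B and C' : X' → Y by C' = C∘ι_{X'}, where P_{X'} is the orthogonal projection of X onto X' and ι_{X'} the inclusion of X' into X. Then: (i) the system Σ' = (A',B',C',D) is passive; (ii) C'∘A'ⁿ∘B' = C∘Aⁿ∘B for every n ≥ 0 (so Σ' realizes the same transfer function as Σ); and (iii) Σ' is minimal, i.e. the closed linear span of ⋃_{n ≥ 0} range(A'ⁿ∘B') equals X' and the closed linear span of ⋃_{n ≥ 0} range((A'*)ⁿ∘C'*) equals X'. -/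

import Mathlib

/-!
STATEMENT 6: The first minimal restriction of a passive system.  Given a passive
system Σ = (A,B,C,D), let X' be the closure of P_{X^o}(X^c).  With
A' = P_{X'}∘A∘ι_{X'}, B' = P_{X'}∘B, C' = C∘ι_{X'}, the system Σ' = (A',B',C',D)
is passive, has the same moments C'A'ⁿB' = CAⁿB (hence the same transfer function),
and is minimal (controllable and observable).
-/

noncomputable section

open ContinuousLinearMap

variable {X U Y : Type*}
  [NormedAddCommGroup X] [InnerProductSpace ℂ X] [CompleteSpace X]
  [NormedAddCommGroup U] [InnerProductSpace ℂ U] [CompleteSpace U]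
  [NormedAddCommGroup Y] [InnerProductSpace ℂ Y] [CompleteSpace Y]

/-- The controllable subspace `X^c` of the system. -/
def contSub (A : X →L[ℂ] X) (B : U →L[ℂ] X) : Submodule ℂ X :=
  (Submodule.span ℂ (⋃ n : ℕ, Set.range fun u : U => (A ^ n) (B u))).topologicalClosure

/-- The observable subspace `X^o` of the system. -/
def obsSub (A : X →L[ℂ] X) (C : X →L[ℂ] Y) : Submodule ℂ X :=
  (Submodule.span ℂ (⋃ n : ℕ, Set.range fun y : Y =>
    ((ContinuousLinearMap.adjoint A) ^ n) ((ContinuousLinearMap.adjoint C) y))).topologicalClosure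

instance (A : X →L[ℂ] X) (C : X →L[ℂ] Y) : CompleteSpace (obsSub A C) :=
  (Submodule.isClosed_topologicalClosure _).completeSpace_coe

/-- Orthogonal projection of `X` onto the observable subspace `X^o`, viewed as an
operator `X → X`. -/
def projObs (A : X →L[ℂ] X) (C : X →L[ℂ] Y) : X →L[ℂ] X :=
  (obsSub A C).subtypeL.comp (Submodule.orthogonalProjectionOnto (obsSub A C))

/-- The state space `X'` of the first minimal restriction: the closure of
`P_{X^o}(X^c)`. -/
def Xprime (A : X →L[ℂ] X) (B : U →L[ℂ] X) (C : X →L[ℂ] Y) : Submodule ℂ X :=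
  ((contSub A B).map (projObs A C).toLinearMap).topologicalClosure

instance (A : X →L[ℂ] X) (B : U →L[ℂ] X) (C : X →L[ℂ] Y) :
    CompleteSpace (Xprime A B C) :=
  (Submodule.isClosed_topologicalClosure _).completeSpace_coe

/-- The main operator `A' = P_{X'}∘A∘ι_{X'}` of the first minimal restriction. -/
def Aprime (A : X →L[ℂ] X) (B : U →L[ℂ] X) (C : X →L[ℂ] Y) :
    Xprime A B C →L[ℂ] Xprime A B C :=
  (Submodule.orthogonalProjectionOnto (Xprime A B C)).comp (A.comp (Xprime A B C).subtypeL)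

/-- The control operator `B' = P_{X'}∘B` of the first minimal restriction. -/
def Bprime (A : X →L[ℂ] X) (B : U →L[ℂ] X) (C : X →L[ℂ] Y) : U →L[ℂ] Xprime A B C :=
  (Submodule.orthogonalProjectionOnto (Xprime A B C)).comp B

/-- The observation operator `C' = C∘ι_{X'}` of the first minimal restriction. -/
def Cprime (A : X →L[ℂ] X) (B : U →L[ℂ] X) (C : X →L[ℂ] Y) : Xprime A B C →L[ℂ] Y :=
  C.comp (Xprime A B C).subtypeL

/-!
The orthogonal complement of `X^o` is `⋂ₙ ker (C Aⁿ)`, so it is `A`-invariant and killed by `C`;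
with `P = P_{X^o}` this gives `P Aⁿ P = P Aⁿ` and `C P = C`. As `X^c` is `A`-invariant, `P A`
maps `P(X^c)` into itself, hence maps its closure `X' ⊆ X^o` into `X'`. So the compression `A'`
is just `P A` on `X'`, and `A'ⁿ B' = P Aⁿ B`, `A'ⁿ = P Aⁿ` on `X'`. Then `C' A'ⁿ B' = C Aⁿ B`;
a vector of `X'` orthogonal to all `A'ⁿ B' u` is orthogonal to `X^c`, hence to `P(X^c)` and to
`X'`; a vector `x` of `X'` with `C' A'ⁿ x = C Aⁿ x = 0` for all `n` lies in `X^o ∩ (X^o)ᗮ`. Passivity holds because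
`A' x + B' u = P_{X'} (A x + B u)`.
-/

open scoped InnerProductSpace

set_option linter.unusedSectionVars false

namespace Submodule

variable {𝕜 E : Type*} [RCLike 𝕜] [NormedAddCommGroup E] [InnerProductSpace 𝕜 E]

theorem mem_orthogonal_span_iff {s : Set E} {x : E} :
    x ∈ (span 𝕜 s)ᗮ ↔ ∀ u ∈ s, ⟪u, x⟫_𝕜 = 0 := by
  refine ⟨fun h u hu => h u (subset_span hu), fun h u hu => ?_⟩
  have hle : span 𝕜 s ≤ (𝕜 ∙ x)ᗮ :=
    span_le.2 fun v hv => mem_orthogonal_singleton_iff_inner_left.2 (h v hv)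
  exact mem_orthogonal_singleton_iff_inner_left.1 (hle hu)

theorem coe_orthogonalProjectionOnto_of_le {K L : Submodule 𝕜 E} [K.HasOrthogonalProjection]
    [L.HasOrthogonalProjection] (hKL : K ≤ L) {v : E} (hv : L.starProjection v ∈ K) :
    (K.orthogonalProjectionOnto v : E) = L.starProjection v := by
  rw [← orthogonalProjectionOnto_starProjection_of_le hKL,
    orthogonalProjectionOnto_mem_subspace_eq_self (K := K) ⟨_, hv⟩]

end Submodule

namespace ContinuousLinearMap

variable {𝕜 E F : Type*} [RCLike 𝕜] [NormedAddCommGroup E] [InnerProductSpace 𝕜 E]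
  [CompleteSpace E] [NormedAddCommGroup F] [InnerProductSpace 𝕜 F] [CompleteSpace F]

theorem inner_adjoint_pow_adjoint_apply (A : E →L[𝕜] E) (C : E →L[𝕜] F) (n : ℕ) (y : F) (x : E) :
    ⟪(adjoint A ^ n) (adjoint C y), x⟫_𝕜 = ⟪y, C ((A ^ n) x)⟫_𝕜 := by
  rw [← star_eq_adjoint, ← star_pow, star_eq_adjoint, adjoint_inner_left, adjoint_inner_left]

theorem mem_orthogonal_span_adjoint_pow_iff (A : E →L[𝕜] E) (C : E →L[𝕜] F) (x : E) :
    x ∈ (Submodule.span 𝕜 (⋃ n : ℕ, Set.range fun y : F => (adjoint A ^ n) (adjoint C y)))ᗮ ↔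
      ∀ n : ℕ, C ((A ^ n) x) = 0 := by
  rw [Submodule.mem_orthogonal_span_iff]
  constructor
  · intro h n
    rw [← inner_self_eq_zero (𝕜 := 𝕜), ← inner_adjoint_pow_adjoint_apply]
    exact h _ (Set.mem_iUnion.2 ⟨n, _, rfl⟩)
  · intro h _ hu
    obtain ⟨n, y, rfl⟩ := Set.mem_iUnion.1 hu
    rw [inner_adjoint_pow_adjoint_apply, h n, inner_zero_right]

end ContinuousLinearMap

section FirstMinimalRestriction

variable (A : X →L[ℂ] X) (B : U →L[ℂ] X) (C : X →L[ℂ] Y)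

theorem projObs_eq_starProjection : projObs A C = (obsSub A C).starProjection := rfl

theorem mem_orthogonal_obsSub_iff (x : X) :
    x ∈ (obsSub A C)ᗮ ↔ ∀ n : ℕ, C ((A ^ n) x) = 0 := by
  rw [obsSub, Submodule.orthogonal_closure, mem_orthogonal_span_adjoint_pow_iff]

theorem pow_apply_mem_orthogonal_obsSub (n : ℕ) {v : X} (hv : v ∈ (obsSub A C)ᗮ) :
    (A ^ n) v ∈ (obsSub A C)ᗮ := by
  rw [mem_orthogonal_obsSub_iff] at hv ⊢
  intro m
  rw [← mul_apply_eq_comp, ← pow_add]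
  exact hv (m + n)

theorem C_projObs_apply (v : X) : C (projObs A C v) = C v := by
  have h := (mem_orthogonal_obsSub_iff A C _).1 ((obsSub A C).sub_starProjection_mem_orthogonal v) 0
  rw [pow_zero, one_apply_eq_self, map_sub, sub_eq_zero] at h
  exact h.symm

theorem projObs_pow_projObs_apply (n : ℕ) (v : X) :
    projObs A C ((A ^ n) (projObs A C v)) = projObs A C ((A ^ n) v) := by
  refine (sub_eq_zero.1 ?_).symm
  rw [← map_sub, ← map_sub, projObs_eq_starProjection, Submodule.starProjection_apply_eq_zero_iff]
  exact pow_apply_mem_orthogonal_obsSub A C n ((obsSub A C).sub_starProjection_mem_orthogonal v)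

theorem inner_projObs_apply_of_mem_obsSub (v : X) {x : X} (hx : x ∈ obsSub A C) :
    ⟪projObs A C v, x⟫_ℂ = ⟪v, x⟫_ℂ := by
  rw [projObs_eq_starProjection, Submodule.inner_starProjection_left_eq_right,
    Submodule.starProjection_eq_self_iff.2 hx]

theorem B_apply_mem_contSub (u : U) : B u ∈ contSub A B :=
  Submodule.le_topologicalClosure _ <| Submodule.subset_span <|
    Set.mem_iUnion.2 ⟨0, u, by simp⟩

theorem apply_mem_contSub {x : X} (hx : x ∈ contSub A B) : A x ∈ contSub A B := by
  set S := Submodule.span ℂ (⋃ n : ℕ, Set.range fun u : U => (A ^ n) (B u))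
  have hS : S.map A.toLinearMap ≤ S := by
    refine (Submodule.map_span_le _ _ _).2 fun _ hv => ?_
    obtain ⟨n, u, rfl⟩ := Set.mem_iUnion.1 hv
    refine Submodule.subset_span (Set.mem_iUnion.2 ⟨n + 1, u, ?_⟩)
    change (A ^ (n + 1)) (B u) = A ((A ^ n) (B u))
    rw [pow_succ', mul_apply_eq_comp]
  exact map_mem_closure A.continuous hx fun v hv => hS ⟨v, hv, rfl⟩

theorem Xprime_le_obsSub : Xprime A B C ≤ obsSub A C := by
  refine Submodule.topologicalClosure_minimal _ ?_ (Submodule.isClosed_topologicalClosure _)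
  rintro _ ⟨v, -, rfl⟩
  exact (Submodule.orthogonalProjectionOnto (obsSub A C) v).2

theorem projObs_apply_mem_Xprime {v : X} (hv : v ∈ contSub A B) :
    projObs A C v ∈ Xprime A B C :=
  Submodule.le_topologicalClosure _ ⟨v, hv, rfl⟩

theorem projObs_A_apply_mem_Xprime {x : X} (hx : x ∈ Xprime A B C) :
    projObs A C (A x) ∈ Xprime A B C := by
  have hclosed : IsClosed ((Xprime A B C).comap ((projObs A C).comp A).toLinearMap : Set X) :=
    (Submodule.isClosed_topologicalClosure _).preimage ((projObs A C).comp A).continuous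
  refine Submodule.topologicalClosure_minimal _ ?_ hclosed hx
  rintro _ ⟨v, hv, rfl⟩
  have hPAP := projObs_pow_projObs_apply A C 1 v
  rw [pow_one] at hPAP
  change projObs A C (A (projObs A C v)) ∈ Xprime A B C
  rw [hPAP]
  exact projObs_apply_mem_Xprime A B C (apply_mem_contSub A B hv)

theorem coe_Aprime_apply (x : Xprime A B C) : (Aprime A B C x : X) = projObs A C (A x) :=
  Submodule.coe_orthogonalProjectionOnto_of_le (Xprime_le_obsSub A B C)
    (projObs_A_apply_mem_Xprime A B C x.2)

theorem coe_Bprime_apply (u : U) : (Bprime A B C u : X) = projObs A C (B u) :=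
  Submodule.coe_orthogonalProjectionOnto_of_le (Xprime_le_obsSub A B C)
    (projObs_apply_mem_Xprime A B C (B_apply_mem_contSub A B u))

theorem coe_Aprime_pow_apply (n : ℕ) (x : Xprime A B C) :
    ((Aprime A B C ^ n) x : X) = projObs A C ((A ^ n) x) := by
  induction n generalizing x with
  | zero =>
    simp only [pow_zero, one_apply_eq_self]
    exact ((obsSub A C).starProjection_eq_self_iff.2 (Xprime_le_obsSub A B C x.2)).symm
  | succ n ih =>
    rw [pow_succ, mul_apply_eq_comp, ih, coe_Aprime_apply, projObs_pow_projObs_apply, pow_succ,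
      mul_apply_eq_comp]

theorem coe_Aprime_pow_Bprime_apply (n : ℕ) (u : U) :
    ((Aprime A B C ^ n) (Bprime A B C u) : X) = projObs A C ((A ^ n) (B u)) := by
  rw [coe_Aprime_pow_apply, coe_Bprime_apply, projObs_pow_projObs_apply]

theorem eq_zero_of_mem_Xprime_of_mem_orthogonal_contSub {x : X} (hx : x ∈ Xprime A B C)
    (hxc : x ∈ (contSub A B)ᗮ) : x = 0 := by
  have hx' : x ∈ (Xprime A B C)ᗮ := by
    rw [Xprime, Submodule.orthogonal_closure]
    rintro _ ⟨v, hv, rfl⟩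
    change ⟪projObs A C v, x⟫_ℂ = 0
    rw [inner_projObs_apply_of_mem_obsSub A C v (Xprime_le_obsSub A B C hx)]
    exact hxc v hv
  exact Submodule.disjoint_def.1 (Xprime A B C).orthogonal_disjoint x hx hx'

theorem passive_Aprime_Bprime_Cprime (D : U →L[ℂ] Y)
    (hpass : ∀ (x : X) (u : U), ‖A x + B u‖ ^ 2 + ‖C x + D u‖ ^ 2 ≤ ‖x‖ ^ 2 + ‖u‖ ^ 2)
    (x : Xprime A B C) (u : U) :
    ‖Aprime A B C x + Bprime A B C u‖ ^ 2 + ‖Cprime A B C x + D u‖ ^ 2 ≤ ‖x‖ ^ 2 + ‖u‖ ^ 2 := by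
  have hAB : ‖Aprime A B C x + Bprime A B C u‖ ≤ ‖A x + B u‖ := by
    change ‖(Xprime A B C).orthogonalProjectionOnto (A x) +
      (Xprime A B C).orthogonalProjectionOnto (B u)‖ ≤ _
    rw [← map_add]
    exact (Xprime A B C).norm_orthogonalProjectionOnto_apply_le _
  calc _ ≤ ‖A x + B u‖ ^ 2 + ‖C x + D u‖ ^ 2 := by gcongr; rfl
    _ ≤ ‖x‖ ^ 2 + ‖u‖ ^ 2 := hpass x u

theorem Cprime_comp_Aprime_pow_comp_Bprime (n : ℕ) :
    (Cprime A B C).comp ((Aprime A B C ^ n).comp (Bprime A B C)) = C.comp ((A ^ n).comp B) := by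
  ext u
  change C ((Aprime A B C ^ n) (Bprime A B C u) : X) = C ((A ^ n) (B u))
  rw [coe_Aprime_pow_Bprime_apply, C_projObs_apply]

theorem topologicalClosure_span_Aprime_pow_Bprime_eq_top :
    (Submodule.span ℂ (⋃ n : ℕ, Set.range fun u : U =>
      (Aprime A B C ^ n) (Bprime A B C u))).topologicalClosure = ⊤ := by
  rw [Submodule.topologicalClosure_eq_top_iff, Submodule.eq_bot_iff]
  intro x hx
  rw [Submodule.mem_orthogonal_span_iff] at hx
  have hxc : (x : X) ∈ (contSub A B)ᗮ := by
    rw [contSub, Submodule.orthogonal_closure, Submodule.mem_orthogonal_span_iff]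
    intro _ hv
    obtain ⟨n, u, rfl⟩ := Set.mem_iUnion.1 hv
    rw [← inner_projObs_apply_of_mem_obsSub A C _ (Xprime_le_obsSub A B C x.2),
      ← coe_Aprime_pow_Bprime_apply]
    exact hx _ (Set.mem_iUnion.2 ⟨n, u, rfl⟩)
  exact Subtype.ext (eq_zero_of_mem_Xprime_of_mem_orthogonal_contSub A B C x.2 hxc)

theorem topologicalClosure_span_adjoint_Aprime_pow_adjoint_Cprime_eq_top :
    (Submodule.span ℂ (⋃ n : ℕ, Set.range fun y : Y =>
      (adjoint (Aprime A B C) ^ n) (adjoint (Cprime A B C) y))).topologicalClosure = ⊤ := by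
  rw [Submodule.topologicalClosure_eq_top_iff, Submodule.eq_bot_iff]
  intro x hx
  rw [mem_orthogonal_span_adjoint_pow_iff] at hx
  have hxo : (x : X) ∈ (obsSub A C)ᗮ := by
    rw [mem_orthogonal_obsSub_iff]
    intro n
    rw [← C_projObs_apply, ← coe_Aprime_pow_apply]
    exact hx n
  exact Subtype.ext <|
    Submodule.disjoint_def.1 (obsSub A C).orthogonal_disjoint _ (Xprime_le_obsSub A B C x.2) hxo

end FirstMinimalRestriction

theorem statement6 (A : X →L[ℂ] X) (B : U →L[ℂ] X) (C : X →L[ℂ] Y) (D : U →L[ℂ] Y)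
    (hpass : ∀ (x : X) (u : U),
      ‖A x + B u‖ ^ 2 + ‖C x + D u‖ ^ 2 ≤ ‖x‖ ^ 2 + ‖u‖ ^ 2) :
    (∀ (x : Xprime A B C) (u : U),
        ‖Aprime A B C x + Bprime A B C u‖ ^ 2 + ‖Cprime A B C x + D u‖ ^ 2
          ≤ ‖x‖ ^ 2 + ‖u‖ ^ 2)
    ∧ (∀ n : ℕ,
        (Cprime A B C).comp (((Aprime A B C) ^ n).comp (Bprime A B C))
          = C.comp ((A ^ n).comp B))
    ∧ (Submodule.span ℂ (⋃ n : ℕ, Set.range fun u : U =>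
        ((Aprime A B C) ^ n) (Bprime A B C u))).topologicalClosure = ⊤
    ∧ (Submodule.span ℂ (⋃ n : ℕ, Set.range fun y : Y =>
        ((ContinuousLinearMap.adjoint (Aprime A B C)) ^ n)
          ((ContinuousLinearMap.adjoint (Cprime A B C)) y))).topologicalClosure = ⊤ :=
  ⟨passive_Aprime_Bprime_Cprime A B C D hpass, Cprime_comp_Aprime_pow_comp_Bprime A B C,
    topologicalClosure_span_Aprime_pow_Bprime_eq_top A B C,
    topologicalClosure_span_adjoint_Aprime_pow_adjoint_Cprime_eq_top A B C⟩

end
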